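/- On a path under strict preferences, there is a reachable assignment σ with σ(k) = o_1 and σ(k-1) = o_{n'} in the full instance on agents 1,...,n if and only if there is such a reachable assignment in the instance restricted to agents 1,...,n' and objects o_1,...,o_{n'}. -/

import Mathlib

/-- An assignment maps agents to objects bijectively (agents and objects are both `Fin n`;
object `o_i` is identified with index `i`, agent `i` initially holds `o_i`). -/
abbrev Assignment (n : ℕ) := Equiv.Perm (Fin n)

/-- `u j o` is agent `j`'s utility for object `o`; strict linear preferences mean each `u j`
is injective, and `o ≻_j o'` iff `u j o > u j o'`. -/
def StrictPref {n : ℕ} (u : Fin n → Fin n → ℕ) : Prop := ∀ j, Function.Injective (u j)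

/-- A rational swap under strict preferences: two adjacent agents exchange objects, each
strictly preferring the object received. -/
def SwapStep {n : ℕ} (adj : Fin n → Fin n → Prop) (u : Fin n → Fin n → ℕ)
    (σ σ' : Assignment n) : Prop :=
  ∃ a b : Fin n, adj a b ∧ u a (σ b) > u a (σ a) ∧ u b (σ a) > u b (σ b) ∧
    σ' = σ * Equiv.swap a b

/-- `σseq 0, σseq 1, …, σseq t` is a sequence of swaps. -/
def SwapSeq {n : ℕ} (adj : Fin n → Fin n → Prop) (u : Fin n → Fin n → ℕ)
    (σseq : ℕ → Assignment n) (t : ℕ) : Prop :=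
  ∀ m < t, SwapStep adj u (σseq m) (σseq (m + 1))

/-- Adjacency of the path `0 – 1 – ⋯ – (n-1)`. -/
def pathAdj {n : ℕ} (i j : Fin n) : Prop := i.val + 1 = j.val ∨ j.val + 1 = i.val

/-- `σ` is reachable from the identity endowment via rational swaps. -/
def ReachableAssign {n : ℕ} (adj : Fin n → Fin n → Prop) (u : Fin n → Fin n → ℕ)
    (σ : Assignment n) : Prop :=
  ∃ t σseq, σseq 0 = 1 ∧ SwapSeq adj u σseq t ∧ σseq t = σ

/-!
Under strict preferences every swap strictly improves both agents involved, so an agent never gets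
back an object it has given away. As objects move one step at a time along the path, the position
of every object is therefore monotone in time. In particular `o_{n'}` only moves left, and the
agents to its left evolve independently of the others: the restricted instance can replay every
swap among them. Moreover `o_1` and `o_{n'}` must cross, which they can only do by being swapped
between agents `k - 1` and `k`. Replaying the run up to that moment and then performing this swap
gives the required assignment in the restricted instance. Conversely, a run of the restricted
instance is a run of the full one in which the other agents keep their objects.
-/

open Equiv Relation Set

section General

variable {n : ℕ} {adj : Fin n → Fin n → Prop} {u : Fin n → Fin n → ℕ}

theorem reachableAssign_iff_reflTransGen {σ : Assignment n} :
    ReachableAssign adj u σ ↔ ReflTransGen (SwapStep adj u) 1 σ := by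
  constructor
  · rintro ⟨t, σs, h0, hs, rfl⟩
    suffices ∀ m ≤ t, ReflTransGen (SwapStep adj u) 1 (σs m) from this t le_rfl
    intro m
    induction m with
    | zero => exact fun _ => h0 ▸ .refl
    | succ m ih => exact fun hm => (ih (by omega)).tail (hs m hm)
  · intro h
    induction h with
    | refl => exact ⟨0, fun _ => 1, rfl, fun m hm => absurd hm m.not_lt_zero, rfl⟩
    | @tail σ σ' _ hstep ih =>
      obtain ⟨t, σs, h0, hs, rfl⟩ := ih
      refine ⟨t + 1, Function.update σs (t + 1) σ', ?_, ?_, Function.update_self ..⟩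
      · rwa [Function.update_of_ne (by omega)]
      · intro m hm
        rw [Function.update_of_ne (by omega)]
        rcases Nat.lt_succ_iff_lt_or_eq.1 hm with hm | rfl
        · rw [Function.update_of_ne (by omega)]
          exact hs m hm
        · rwa [Function.update_self]

theorem SwapStep.utility_le {σ σ' : Assignment n} (h : SwapStep adj u σ σ') (c : Fin n) :
    u c (σ c) ≤ u c (σ' c) := by
  obtain ⟨a, b, -, ha, hb, rfl⟩ := h
  rw [Perm.mul_apply, swap_apply_def]
  split_ifs with hca hcb
  · exact hca ▸ ha.le
  · exact hcb ▸ hb.le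
  · exact le_rfl

variable {σs : ℕ → Assignment n} {t : ℕ}

theorem SwapSeq.utility_mono (hs : SwapSeq adj u σs t) (c : Fin n) {m m' : ℕ} (hmm' : m ≤ m')
    (hm' : m' ≤ t) : u c (σs m c) ≤ u c (σs m' c) := by
  induction m', hmm' using Nat.le_induction with
  | base => exact le_rfl
  | succ m' _ ih => exact (ih (by omega)).trans ((hs m' (by omega)).utility_le c)

theorem SwapSeq.inv_apply_eq_of_inv_apply_eq (hu : StrictPref u) (hs : SwapSeq adj u σs t)
    (o : Fin n) {m₁ m₂ m₃ : ℕ} (h₁₂ : m₁ ≤ m₂) (h₂₃ : m₂ ≤ m₃) (h₃ : m₃ ≤ t)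
    (h : (σs m₃)⁻¹ o = (σs m₁)⁻¹ o) : (σs m₂)⁻¹ o = (σs m₁)⁻¹ o := by
  set c := (σs m₁)⁻¹ o
  have hc₁ : σs m₁ c = o := (σs _).apply_symm_apply o
  have hc₃ : σs m₃ c = o := h ▸ (σs _).apply_symm_apply o
  have hle₁ := hs.utility_mono c h₁₂ (h₂₃.trans h₃)
  have hle₃ := hs.utility_mono c h₂₃ h₃
  rw [hc₁] at hle₁
  rw [hc₃] at hle₃
  rw [Perm.inv_eq_iff_eq]
  exact (hu c (le_antisymm hle₃ hle₁)).symm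

end General

theorem exists_eq_of_mem_uIcc_of_step_le_one {f : ℕ → ℕ} {a b v : ℕ} (hab : a ≤ b)
    (hf : ∀ m, a ≤ m → m < b → f (m + 1) ≤ f m + 1 ∧ f m ≤ f (m + 1) + 1)
    (hv : v ∈ uIcc (f a) (f b)) : ∃ s ∈ Icc a b, f s = v := by
  induction b, hab using Nat.le_induction with
  | base =>
    rw [uIcc_self, mem_singleton_iff] at hv
    exact ⟨a, left_mem_Icc.2 le_rfl, hv.symm⟩
  | succ b hab ih =>
    by_cases hvb : v ∈ uIcc (f a) (f b)
    · obtain ⟨s, hs, hfs⟩ := ih (fun m h₁ h₂ => hf m h₁ (by omega)) hvb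
      exact ⟨s, Icc_subset_Icc_right (by omega) hs, hfs⟩
    · refine ⟨b + 1, ⟨by omega, le_rfl⟩, ?_⟩
      have := hf b hab (by omega)
      rw [mem_uIcc] at hv hvb
      omega

/-- A walk on `ℕ` with steps of size at most one that stays put whenever it revisits a point
is monotone or antitone. -/
theorem mem_uIcc_of_step_le_one {p : ℕ → ℕ} {t : ℕ}
    (hstep : ∀ j < t, p (j + 1) ≤ p j + 1 ∧ p j ≤ p (j + 1) + 1)
    (hreturn : ∀ i j l, i ≤ j → j ≤ l → l ≤ t → p l = p i → p j = p i)
    {m₁ m m₂ : ℕ} (h₁ : m₁ ≤ m) (h₂ : m ≤ m₂) (ht : m₂ ≤ t) : p m ∈ uIcc (p m₁) (p m₂) := by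
  by_contra hm
  have : p m₁ ∈ uIcc (p m) (p m₂) ∨ p m₂ ∈ uIcc (p m₁) (p m) := by
    simp only [mem_uIcc] at hm ⊢
    omega
  rcases this with h | h
  · obtain ⟨s, ⟨hms, hsm₂⟩, hs⟩ :=
      exists_eq_of_mem_uIcc_of_step_le_one h₂ (fun j _ hj => hstep j (by omega)) h
    exact hm (hreturn _ _ _ h₁ hms (hsm₂.trans ht) hs ▸ left_mem_uIcc)
  · obtain ⟨s, ⟨-, hsm⟩, hs⟩ :=
      exists_eq_of_mem_uIcc_of_step_le_one h₁ (fun j _ hj => hstep j (by omega)) h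
    exact hm ((hreturn _ _ _ hsm h₂ ht hs.symm).trans hs ▸ right_mem_uIcc)

section Path

variable {n : ℕ} {u : Fin n → Fin n → ℕ}

theorem SwapStep.exists_succ_eq {σ σ' : Assignment n} (h : SwapStep pathAdj u σ σ') :
    ∃ a b : Fin n, a.val + 1 = b.val ∧ u a (σ b) > u a (σ a) ∧ u b (σ a) > u b (σ b) ∧
      σ' = σ * swap a b := by
  obtain ⟨a, b, hab | hba, ha, hb, rfl⟩ := h
  · exact ⟨a, b, hab, ha, hb, rfl⟩
  · exact ⟨b, a, hba, hb, ha, by rw [swap_comm]⟩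

theorem inv_mul_swap_apply (σ : Assignment n) (a b o : Fin n) :
    (σ * swap a b)⁻¹ o = swap a b (σ⁻¹ o) := by
  simp [mul_inv_rev, Perm.mul_apply]

theorem val_swap_le_of_succ_eq {a b : Fin n} (hab : a.val + 1 = b.val) (x : Fin n) :
    (swap a b x).val ≤ x.val + 1 ∧ x.val ≤ (swap a b x).val + 1 := by
  rw [swap_apply_def]
  split_ifs <;> simp only [Fin.ext_iff] at * <;> omega

theorem eq_and_eq_of_swap_lt_swap {a b p q : Fin n} (hab : a.val + 1 = b.val) (hpq : p < q)
    (hqp : swap a b q < swap a b p) : p = a ∧ q = b := by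
  rw [swap_apply_def, swap_apply_def] at hqp
  simp only [Fin.ext_iff, Fin.lt_def] at *
  split_ifs at hqp <;> omega

variable {σs : ℕ → Assignment n} {t : ℕ}

theorem SwapSeq.val_inv_apply_mem_uIcc (hu : StrictPref u) (hs : SwapSeq pathAdj u σs t)
    (o : Fin n) {m₁ m m₂ : ℕ} (h₁ : m₁ ≤ m) (h₂ : m ≤ m₂) (ht : m₂ ≤ t) :
    ((σs m)⁻¹ o).val ∈ uIcc ((σs m₁)⁻¹ o).val ((σs m₂)⁻¹ o).val := by
  refine mem_uIcc_of_step_le_one (p := fun m => ((σs m)⁻¹ o).val) ?_ ?_ h₁ h₂ ht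
  · intro j hj
    obtain ⟨a, b, hab, -, -, he⟩ := (hs j hj).exists_succ_eq
    simp only [he, inv_mul_swap_apply]
    exact val_swap_le_of_succ_eq hab _
  · exact fun i j l hij hjl hl h => congrArg Fin.val
      (hs.inv_apply_eq_of_inv_apply_eq hu o hij hjl hl (Fin.ext h))

theorem SwapSeq.antitoneOn_val_inv_apply (hu : StrictPref u) (hs : SwapSeq pathAdj u σs t)
    {o : Fin n} (h : ((σs t)⁻¹ o).val ≤ ((σs 0)⁻¹ o).val) :
    AntitoneOn (fun m => ((σs m)⁻¹ o).val) (Iic t) := by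
  intro m hm m' hm' hmm'
  rw [mem_Iic] at hm hm'
  have h₁ := hs.val_inv_apply_mem_uIcc hu o (Nat.zero_le m) hm le_rfl
  have h₂ := hs.val_inv_apply_mem_uIcc hu o hmm' hm' le_rfl
  simp only [mem_uIcc] at h₁ h₂ ⊢
  omega

theorem SwapSeq.exists_swap_of_cross (hu : StrictPref u) (h0 : σs 0 = 1)
    (hs : SwapSeq pathAdj u σs t) {a b x y : Fin n} (hab : a.val + 1 = b.val)
    (hxb : x.val < b.val) (hay : a.val < y.val) (hx : σs t b = x) (hy : σs t a = y) :
    ∃ m < t, σs m a = x ∧ σs m b = y ∧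
      u a (σs m b) > u a (σs m a) ∧ u b (σs m a) > u b (σs m b) := by
  have hcross_t : (σs t)⁻¹ y < (σs t)⁻¹ x := by
    rw [Perm.inv_eq_iff_eq.2 hx.symm, Perm.inv_eq_iff_eq.2 hy.symm, Fin.lt_def]
    omega
  have hcross : ∃ m, (σs m)⁻¹ y < (σs m)⁻¹ x := ⟨t, hcross_t⟩
  have hfirst_pos : Nat.find hcross ≠ 0 := by
    intro h
    have := Nat.find_spec hcross
    rw [h, h0, Fin.lt_def] at this
    simp only [inv_one, Perm.one_apply] at this
    omega
  obtain ⟨m, hm⟩ := Nat.exists_eq_succ_of_ne_zero hfirst_pos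
  have hmt : m + 1 ≤ t := by
    have := Nat.find_min' hcross hcross_t
    omega
  have hbefore : (σs m)⁻¹ x < (σs m)⁻¹ y := by
    have hne : (σs m)⁻¹ x ≠ (σs m)⁻¹ y := fun h => by
      have := (σs m)⁻¹.injective h
      subst this
      omega
    exact lt_of_le_of_ne (not_lt.1 (Nat.find_min hcross (by omega))) hne
  have hafter : (σs (m + 1))⁻¹ y < (σs (m + 1))⁻¹ x := by
    have := Nat.find_spec hcross
    rwa [hm] at this
  obtain ⟨c, d, hcd, hc, hd, he⟩ := (hs m (by omega)).exists_succ_eq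
  rw [he, inv_mul_swap_apply, inv_mul_swap_apply] at hafter
  obtain ⟨hxc, hyd⟩ := eq_and_eq_of_swap_lt_swap hcd hbefore hafter
  rw [Perm.inv_eq_iff_eq] at hxc hyd
  have hxd : (σs (m + 1))⁻¹ x = d := by
    rw [he, inv_mul_swap_apply, Perm.inv_eq_iff_eq.2 hxc, swap_apply_left]
  have hyc : (σs (m + 1))⁻¹ y = c := by
    rw [he, inv_mul_swap_apply, Perm.inv_eq_iff_eq.2 hyd, swap_apply_right]
  have hx_le := hs.val_inv_apply_mem_uIcc hu x (Nat.zero_le _) hmt le_rfl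
  have hy_ge := hs.val_inv_apply_mem_uIcc hu y (Nat.zero_le _) hmt le_rfl
  rw [hxd, h0, Perm.inv_eq_iff_eq.2 hx.symm] at hx_le
  rw [hyc, h0, Perm.inv_eq_iff_eq.2 hy.symm] at hy_ge
  simp only [inv_one, Perm.one_apply, mem_uIcc] at hx_le hy_ge
  obtain rfl : c = a := Fin.ext (by omega)
  obtain rfl : d = b := Fin.ext (by omega)
  exact ⟨m, by omega, hxc.symm, hyd.symm, hc, hd⟩

end Path

theorem Equiv.Perm.viaEmbedding_swap {α β : Type*} [DecidableEq α] [DecidableEq β] (ι : α ↪ β)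
    (a b : α) : (swap a b).viaEmbedding ι = swap (ι a) (ι b) := by
  ext x
  by_cases hx : x ∈ range ι
  · obtain ⟨y, rfl⟩ := hx
    rw [Perm.viaEmbedding_apply, ι.injective.swap_apply]
  · have hne : ∀ z, x ≠ ι z := fun z hz => hx ⟨z, hz.symm⟩
    rw [Perm.viaEmbedding_apply_of_notMem _ _ _ hx, swap_apply_of_ne_of_ne (hne a) (hne b)]

section Restrict

variable {n n' : ℕ} (h : n' ≤ n)

def restrictUtility (u : Fin n → Fin n → ℕ) : Fin n' → Fin n' → ℕ :=
  fun i j => u (Fin.castLE h i) (Fin.castLE h j)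

variable {u : Fin n → Fin n → ℕ}

theorem swapStep_restrictUtility {σ : Assignment n} {τ : Assignment n'} {a b : Fin n'}
    (hab : pathAdj a b) (ha : Fin.castLE h (τ a) = σ (Fin.castLE h a))
    (hb : Fin.castLE h (τ b) = σ (Fin.castLE h b))
    (hua : u (Fin.castLE h a) (σ (Fin.castLE h b)) > u (Fin.castLE h a) (σ (Fin.castLE h a)))
    (hub : u (Fin.castLE h b) (σ (Fin.castLE h a)) > u (Fin.castLE h b) (σ (Fin.castLE h b))) :
    SwapStep pathAdj (restrictUtility h u) τ (τ * swap a b) := by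
  refine ⟨a, b, hab, ?_, ?_, rfl⟩ <;> simp only [restrictUtility, ha, hb] <;> assumption

theorem SwapStep.viaEmbedding_castLEEmb {τ τ' : Assignment n'}
    (hstep : SwapStep pathAdj (restrictUtility h u) τ τ') :
    SwapStep pathAdj u (τ.viaEmbedding (Fin.castLEEmb h)) (τ'.viaEmbedding (Fin.castLEEmb h)) := by
  obtain ⟨a, b, hab, ha, hb, rfl⟩ := hstep
  refine ⟨Fin.castLEEmb h a, Fin.castLEEmb h b, by simpa [pathAdj] using hab, ?_, ?_, ?_⟩
  · rw [Perm.viaEmbedding_apply, Perm.viaEmbedding_apply]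
    exact ha
  · rw [Perm.viaEmbedding_apply, Perm.viaEmbedding_apply]
    exact hb
  · rw [← Perm.viaEmbedding_swap, ← Perm.viaEmbeddingHom_apply, map_mul]
    rfl

theorem ReachableAssign.viaEmbedding_castLEEmb {σ : Assignment n'}
    (hσ : ReachableAssign pathAdj (restrictUtility h u) σ) :
    ReachableAssign pathAdj u (σ.viaEmbedding (Fin.castLEEmb h)) := by
  rw [reachableAssign_iff_reflTransGen] at hσ ⊢
  have hone : (1 : Assignment n').viaEmbedding (Fin.castLEEmb h) = 1 :=
    map_one (Perm.viaEmbeddingHom _)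
  rw [← hone]
  exact hσ.lift _ fun _ _ hstep => hstep.viaEmbedding_castLEEmb h

variable {σs : ℕ → Assignment n} {t : ℕ}

theorem SwapSeq.exists_restrict_agree (h0 : σs 0 = 1) (hs : SwapSeq pathAdj u σs t)
    {o : Fin n} (ho : o.val < n') (hanti : AntitoneOn (fun m => ((σs m)⁻¹ o).val) (Iic t))
    {m : ℕ} (hm : m ≤ t) :
    ∃ τ : Assignment n', ReflTransGen (SwapStep pathAdj (restrictUtility h u)) 1 τ ∧
      ∀ i : Fin n', i.val ≤ ((σs m)⁻¹ o).val → Fin.castLE h (τ i) = σs m (Fin.castLE h i) := by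
  induction m with
  | zero => exact ⟨1, .refl, fun i _ => by rw [h0]; rfl⟩
  | succ m ih =>
    obtain ⟨τ, hτ, hagree⟩ := ih (by omega)
    obtain ⟨a, b, hab, hua, hub, he⟩ := (hs m (by omega)).exists_succ_eq
    have hshrink : ((σs (m + 1))⁻¹ o).val ≤ ((σs m)⁻¹ o).val :=
      hanti (mem_Iic.2 (by omega)) (mem_Iic.2 hm) (by omega)
    have hpos : ((σs m)⁻¹ o).val < n' := by
      refine lt_of_le_of_lt (hanti (mem_Iic.2 (Nat.zero_le t)) (mem_Iic.2 (by omega))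
        (Nat.zero_le m)) ?_
      simpa [h0] using ho
    rcases lt_trichotomy a.val ((σs m)⁻¹ o).val with hlt | heq | hgt
    · have hb : b.val ≤ ((σs m)⁻¹ o).val := by omega
      let a' : Fin n' := ⟨a, by omega⟩
      let b' : Fin n' := ⟨b, by omega⟩
      refine ⟨τ * swap a' b', hτ.tail (swapStep_restrictUtility h (Or.inl hab)
        (hagree a' hlt.le) (hagree b' hb) hua hub), fun i hi => ?_⟩
      have hswap : (swap a' b' i).val ≤ ((σs m)⁻¹ o).val := by
        rw [swap_apply_def]
        split_ifs
        exacts [hb, hlt.le, hi.trans hshrink]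
      rw [Perm.mul_apply, hagree _ hswap, he, Perm.mul_apply,
        (Fin.castLE_injective h).map_swap]
      rfl
    · exfalso
      rw [he, inv_mul_swap_apply, show (σs m)⁻¹ o = a from Fin.ext heq.symm,
        swap_apply_left] at hshrink
      omega
    · refine ⟨τ, hτ, fun i hi => ?_⟩
      have hia : Fin.castLE h i ≠ a := fun hi' => by
        have := congrArg Fin.val hi'
        rw [Fin.val_castLE] at this
        omega
      have hib : Fin.castLE h i ≠ b := fun hi' => by
        have := congrArg Fin.val hi'
        rw [Fin.val_castLE] at this
        omega
      rw [hagree i (hi.trans hshrink), he, Perm.mul_apply, swap_apply_of_ne_of_ne hia hib]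

end Restrict

/-- Indices are 0-based: object `o_1` is `0` and object `o_{n'}` is `n' - 1`. -/
theorem constrained_reachable_iff_truncated {n n' : ℕ}
    (u : Fin n → Fin n → ℕ) (hu : StrictPref u)
    (k : ℕ) (hk1 : 1 ≤ k) (hkn' : k < n') (hn'n : n' ≤ n) :
    (∃ σ : Assignment n, ReachableAssign pathAdj u σ ∧
        σ ⟨k, by omega⟩ = ⟨0, by omega⟩ ∧ σ ⟨k - 1, by omega⟩ = ⟨n' - 1, by omega⟩) ↔
    (∃ σ' : Assignment n', ReachableAssign pathAdj
          (fun i j => u (Fin.castLE hn'n i) (Fin.castLE hn'n j)) σ' ∧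
        σ' ⟨k, hkn'⟩ = ⟨0, by omega⟩ ∧ σ' ⟨k - 1, by omega⟩ = ⟨n' - 1, by omega⟩) := by
  constructor
  · rintro ⟨σ, ⟨t, σs, h0, hs, rfl⟩, hk, hk'⟩
    obtain ⟨m, hmt, hm₀, hmN, hua, hub⟩ := hs.exists_swap_of_cross hu h0
      (by simp only; omega) (by simp only; omega) (by simp only; omega) hk hk'
    have hanti := hs.antitoneOn_val_inv_apply hu (o := ⟨n' - 1, by omega⟩)
      (by simp [Perm.inv_eq_iff_eq.2 hk'.symm, h0]; omega)
    obtain ⟨τ, hτ, hagree⟩ :=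
      hs.exists_restrict_agree hn'n h0 (by simp only; omega) hanti hmt.le
    have hposN : ((σs m)⁻¹ ⟨n' - 1, by omega⟩).val = k := by
      rw [Perm.inv_eq_iff_eq.2 hmN.symm]
    have hτk : τ ⟨k, hkn'⟩ = ⟨n' - 1, by omega⟩ :=
      Fin.castLE_injective hn'n ((hagree _ hposN.ge).trans hmN)
    have hτk' : τ ⟨k - 1, by omega⟩ = ⟨0, by omega⟩ :=
      Fin.castLE_injective hn'n ((hagree _ (by simp only; omega)).trans hm₀)
    refine ⟨τ * swap ⟨k - 1, by omega⟩ ⟨k, hkn'⟩, reachableAssign_iff_reflTransGen.2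
      (hτ.tail (swapStep_restrictUtility hn'n (a := ⟨k - 1, by omega⟩) (b := ⟨k, hkn'⟩)
        (Or.inl (by simp only; omega))
        (hagree _ (by simp only; omega)) (hagree _ hposN.ge) hua hub)), ?_, ?_⟩
    · rw [Perm.mul_apply, swap_apply_right, hτk']
    · rw [Perm.mul_apply, swap_apply_left, hτk]
  · rintro ⟨σ', hσ', hk, hk'⟩
    refine ⟨σ'.viaEmbedding (Fin.castLEEmb hn'n), hσ'.viaEmbedding_castLEEmb hn'n, ?_, ?_⟩
    · exact (Perm.viaEmbedding_apply σ' _ ⟨k, hkn'⟩).trans (congrArg _ hk)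
    · exact (Perm.viaEmbedding_apply σ' _ ⟨k - 1, by omega⟩).trans (congrArg _ hk')
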